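/- arXiv:2509.15428 — 5 statements merged into one kernel-verified Lean document; each statement's English description precedes it below -/
import Mathlib

section
/- Let H be a Kreĭn space with subspaces S = R ⊕ N where R is regular, N neutral, R ⊥ N. Then the isotropic part of the closure of S equals the closure of the isotropic part of S; that is, closure(S) ∩ S^⊥ = closure(S ∩ S^⊥). -/
open ContinuousLinearMap

noncomputable section

namespace KreinPaper

variable {H : Type*} [NormedAddCommGroup H] [InnerProductSpace ℂ H] [CompleteSpace H]

/-- The indefinite orthogonal companion of a subspace, with respect to the
indefinite inner product `[x, y] = ⟪J x, y⟫`. -/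
def kOrth (J : H →L[ℂ] H) (S : Submodule ℂ H) : Submodule ℂ H where
  carrier := {y | ∀ x ∈ S, (inner ℂ (J x) y : ℂ) = 0}
  add_mem' := by
    intro a b ha hb x hx
    simp only [Set.mem_setOf_eq] at ha hb ⊢
    rw [inner_add_right, ha x hx, hb x hx, add_zero]
  zero_mem' := by
    intro x _
    exact inner_zero_right _
  smul_mem' := by
    intro c a ha x hx
    simp only [Set.mem_setOf_eq] at ha ⊢
    rw [inner_smul_right, ha x hx, mul_zero]

/-- A regular subspace: closed, with `R ∩ R^⊥ = 0` and `R + R^⊥ = H`. -/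
def IsRegular (J : H →L[ℂ] H) (R : Submodule ℂ H) : Prop :=
  IsClosed (R : Set H) ∧ R ⊓ kOrth J R = ⊥ ∧ R ⊔ kOrth J R = ⊤

/-- A neutral subspace: the indefinite inner product vanishes on it. -/
def IsNeutral (J : H →L[ℂ] H) (N : Submodule ℂ H) : Prop :=
  ∀ n ∈ N, (inner ℂ (J n) n : ℂ) = 0

/-- Two subspaces are orthogonal in the indefinite inner product. -/
def AreKOrth (J : H →L[ℂ] H) (A B : Submodule ℂ H) : Prop :=
  ∀ a ∈ A, ∀ b ∈ B, (inner ℂ (J a) b : ℂ) = 0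

/-- An operator range: the range of a bounded operator (equivalently, of a
bounded operator on `H` itself). -/
def IsOpRange (S : Submodule ℂ H) : Prop :=
  ∃ T : H →L[ℂ] H, LinearMap.range (T : H →ₗ[ℂ] H) = S

/-- Quasi-pseudo-regular subspace: an operator range which is the orthogonal
sum of a regular subspace and a neutral subspace. -/
def IsQpr (J : H →L[ℂ] H) (S : Submodule ℂ H) : Prop :=
  IsOpRange S ∧ ∃ R N : Submodule ℂ H,
    IsRegular J R ∧ IsNeutral J N ∧ AreKOrth J R N ∧ S = R ⊔ N

/-- Pseudo-regular subspace: a closed subspace which is the orthogonal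
sum of a regular subspace and a neutral subspace. -/
def IsPseudoRegular (J : H →L[ℂ] H) (S : Submodule ℂ H) : Prop :=
  IsClosed (S : Set H) ∧ ∃ R N : Submodule ℂ H,
    IsRegular J R ∧ IsNeutral J N ∧ AreKOrth J R N ∧ S = R ⊔ N

/-- A fundamental symmetry: a selfadjoint involution. -/
def IsFundSym (J : H →L[ℂ] H) : Prop :=
  IsSelfAdjoint J ∧ J ∘L J = ContinuousLinearMap.id ℂ H

/-- The indefinite (Kreĭn space) adjoint `A* = J A† J`. -/
def kAdj (J : H →L[ℂ] H) (A : H →L[ℂ] H) : H →L[ℂ] H :=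
  J ∘L (ContinuousLinearMap.adjoint A) ∘L J

/-! The regular part splits off continuously: if `π` is the bounded projection onto `R^⊥` along
`R`, then `π` maps `S = R + N` onto `N`, so `π x ∈ closure N` for `x ∈ closure S`.
Since `N` is neutral and orthogonal to `R`, `N ⊆ S ∩ S^⊥`, hence `closure N ⊆ S^⊥`. For `x` in
the isotropic part of `closure S`, the component `x - π x ∈ R` then lies in `S^⊥ ⊆ R^⊥`,
so it vanishes by regularity, and `x = π x ∈ closure (S ∩ S^⊥)`. -/

theorem _root_.Submodule.topologicalClosure_sup_le_sup_topologicalClosure {R M : Type*} [Ring R]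
    [TopologicalSpace M] [AddCommGroup M] [Module R M] [IsTopologicalAddGroup M]
    [ContinuousConstSMul R M] {A B N : Submodule R M} (hAB : A.IsTopCompl B) (hNB : N ≤ B) :
    (A ⊔ N).topologicalClosure ≤ A ⊔ N.topologicalClosure := by
  set π := B.projectionL A hAB.symm
  have hπ : A ⊔ N ≤ N.topologicalClosure.comap (π : M →ₗ[R] M) := by
    refine sup_le (fun a ha => ?_) (fun n hn => ?_)
    · have hπa : π a = 0 := Submodule.projectionL_apply_eq_zero_of_mem_right hAB.symm ha
      simp [hπa]
    · have hπn : π n = n := (Submodule.projectionL_eq_self_iff hAB.symm n).2 (hNB hn)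
      simpa [hπn] using N.le_topologicalClosure hn
  intro x hx
  have hπx : π x ∈ N.topologicalClosure :=
    Submodule.topologicalClosure_minimal _ hπ
      (N.isClosed_topologicalClosure.preimage π.continuous) hx
  rw [← Submodule.projectionL_add_projectionL_eq_self hAB x]
  exact Submodule.add_mem_sup (Submodule.projectionL_apply_mem hAB x) hπx

section IndefiniteOrthogonality

variable {E : Type*} [NormedAddCommGroup E] [InnerProductSpace ℂ E] {J : E →L[ℂ] E}

theorem kOrth_eq_orthogonal_map (S : Submodule ℂ E) :
    kOrth J S = (S.map (J : E →ₗ[ℂ] E))ᗮ := by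
  ext y
  simp [Submodule.mem_orthogonal, kOrth]

theorem isClosed_kOrth (S : Submodule ℂ E) : IsClosed (kOrth J S : Set E) :=
  kOrth_eq_orthogonal_map S ▸ Submodule.isClosed_orthogonal _

theorem kOrth_antitone : Antitone (kOrth J) := fun _ _ h _ hy x hx => hy x (h hx)

theorem kOrth_sup (A B : Submodule ℂ E) : kOrth J (A ⊔ B) = kOrth J A ⊓ kOrth J B := by
  refine le_antisymm (le_inf (kOrth_antitone le_sup_left) (kOrth_antitone le_sup_right)) ?_
  rintro y ⟨hA, hB⟩ x hx
  obtain ⟨a, ha, b, hb, rfl⟩ := Submodule.mem_sup.1 hx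
  rw [map_add, inner_add_left, hA a ha, hB b hb, add_zero]

theorem AreKOrth.le_kOrth {A B : Submodule ℂ E} (h : AreKOrth J A B) : B ≤ kOrth J A :=
  fun b hb a ha => h a ha b hb

theorem IsNeutral.le_kOrth_self {N : Submodule ℂ E} (hN : IsNeutral J N) : N ≤ kOrth J N := by
  intro b hb a ha
  have hpol := inner_map_polarization (J : E →ₗ[ℂ] E) b a
  simp only [ContinuousLinearMap.coe_coe] at hpol
  rw [hpol, hN _ (N.add_mem hb ha), hN _ (N.sub_mem hb ha), hN _ (N.add_mem hb (N.smul_mem _ ha)),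
    hN _ (N.sub_mem hb (N.smul_mem _ ha))]
  ring

theorem IsRegular.isTopCompl [CompleteSpace E] {R : Submodule ℂ E} (hR : IsRegular J R) :
    R.IsTopCompl (kOrth J R) :=
  Submodule.IsCompl.isTopCompl_of_isClosed
    (isCompl_iff.2 ⟨disjoint_iff.2 hR.2.1, codisjoint_iff.2 hR.2.2⟩) hR.1 (isClosed_kOrth R)

theorem IsRegular.eq_zero_of_mem_kOrth {R : Submodule ℂ E} (hR : IsRegular J R) {x : E}
    (hxR : x ∈ R) (hx : x ∈ kOrth J R) : x = 0 := by
  have hx' : x ∈ R ⊓ kOrth J R := ⟨hxR, hx⟩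
  rwa [hR.2.1] at hx'

end IndefiniteOrthogonality

theorem closure_isotropic_part_general (J : H →L[ℂ] H)
    (S R N : Submodule ℂ H) (hR : IsRegular J R) (hN : IsNeutral J N)
    (hRN : AreKOrth J R N) (hS : S = R ⊔ N) :
    S.topologicalClosure ⊓ kOrth J S = (S ⊓ kOrth J S).topologicalClosure := by
  subst hS
  have hNiso : N ≤ (R ⊔ N) ⊓ kOrth J (R ⊔ N) :=
    le_inf le_sup_right (kOrth_sup R N ▸ le_inf hRN.le_kOrth hN.le_kOrth_self)
  refine le_antisymm ?_ (le_inf (Submodule.topologicalClosure_mono inf_le_left)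
    (Submodule.topologicalClosure_minimal _ inf_le_right (isClosed_kOrth _)))
  rintro x ⟨hx, hxO⟩
  obtain ⟨r, hr, n, hn, rfl⟩ := Submodule.mem_sup.1 <|
    Submodule.topologicalClosure_sup_le_sup_topologicalClosure hR.isTopCompl hRN.le_kOrth hx
  have hnO : n ∈ kOrth J (R ⊔ N) :=
    Submodule.topologicalClosure_minimal _ (hNiso.trans inf_le_right) (isClosed_kOrth _) hn
  have hrO : r ∈ kOrth J R := kOrth_antitone le_sup_left <| by
    simpa using Submodule.sub_mem _ hxO hnO
  rw [hR.eq_zero_of_mem_kOrth hr hrO, zero_add]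
  exact Submodule.topologicalClosure_mono hNiso hn

/-- the isotropic part of the closure of `S` equals the closure of
the isotropic part of `S`. -/
theorem closure_isotropic_part (J : H →L[ℂ] H) (hJ : IsFundSym J)
    (S R N : Submodule ℂ H) (hR : IsRegular J R) (hN : IsNeutral J N)
    (hRN : AreKOrth J R N) (hS : S = R ⊔ N) :
    S.topologicalClosure ⊓ kOrth J S = (S ⊓ kOrth J S).topologicalClosure :=
  closure_isotropic_part_general J S R N hR hN hRN hS

end KreinPaper
end
end

section
/- Every closed subspace of a Pontryagin space is pseudo-regular: if H is a Kreĭn space with fundamental decomposition H = H₊ ⊕ H₋ where dim H₋ < ∞, and S ⊆ H is closed, then S = R ⊕ N with R regular, N = S ∩ S^⊥ neutral, and R ⊥ N. -/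
/-!
The isotropic part `N = S ∩ S^[⊥]` is neutral, so it meets the `+1`-eigenspace of `J` trivially
and `J - 1` embeds it into the finite-dimensional `H₋`; hence `N` is finite dimensional and
`S = R ⊕ N` with `R = N^⊥ ∩ S` (Hilbert orthogonal complement). As a complement of the
isotropic part inside `S`, `R` is nondegenerate. A closed nondegenerate `R` is regular in a
Pontryagin space: the compression `G = P_R J|_R` is the identity plus the finite-rank operator
`P_R (J - 1)|_R` and is injective by nondegeneracy, hence surjective; solving `G r = P_R J y`
gives `y = r + (y - r)` with `y - r ∈ R^[⊥]`.
-/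

open ContinuousLinearMap

noncomputable section

namespace KreinPaper

variable {H : Type*} [NormedAddCommGroup H] [InnerProductSpace ℂ H] [CompleteSpace H]

theorem range_sub_one_le_eigenspace_neg_one {R M : Type*} [CommRing R] [AddCommGroup M]
    [Module R M] {f : Module.End R M} (hf : Function.Involutive f) :
    LinearMap.range (f - 1) ≤ Module.End.eigenspace f (-1) := by
  rintro - ⟨x, rfl⟩
  rw [Module.End.mem_eigenspace_iff]
  simp [hf x]

/-- `f` maps the finite-dimensional space `range (f - 1)` injectively into itself. -/
theorem surjective_of_injective_of_finiteDimensional_range_sub_one {K M : Type*} [Field K]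
    [AddCommGroup M] [Module K M] {f : Module.End K M}
    (hfin : FiniteDimensional K (LinearMap.range (f - 1))) (hf : Function.Injective f) :
    Function.Surjective f := by
  set V := LinearMap.range (f - 1)
  have hV : ∀ v ∈ V, f v ∈ V := fun v hv => by
    simpa using V.add_mem hv (LinearMap.mem_range_self (f - 1) v)
  have hfV : Function.Surjective (f.restrict hV) :=
    LinearMap.injective_iff_surjective.mp fun a b hab => Subtype.ext (hf congr(($hab : M)))
  intro y
  obtain ⟨w, hw⟩ := hfV ⟨(f - 1) y, LinearMap.mem_range_self _ y⟩
  refine ⟨y - w, ?_⟩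
  have hw' : f w = f y - y := by simpa using congr(($hw : M))
  rw [map_sub, hw', sub_sub_cancel]

omit [CompleteSpace H] in
theorem mem_kOrth {J : H →L[ℂ] H} {S : Submodule ℂ H} {y : H} :
    y ∈ kOrth J S ↔ ∀ x ∈ S, inner ℂ (J x) y = 0 := Iff.rfl

omit [CompleteSpace H] in
theorem isNeutral_inf_kOrth (J : H →L[ℂ] H) (S : Submodule ℂ H) :
    IsNeutral J (S ⊓ kOrth J S) :=
  fun n hn => hn.2 n hn.1

omit [CompleteSpace H] in
/-- A neutral subspace meets the `+1`-eigenspace of `J` trivially, so `J - 1` embeds it into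
the `-1`-eigenspace. -/
theorem IsNeutral.finiteDimensional {J : H →L[ℂ] H}
    (hJJ : J ∘L J = ContinuousLinearMap.id ℂ H)
    (hfin : FiniteDimensional ℂ (Module.End.eigenspace (J : H →ₗ[ℂ] H) (-1)))
    {N : Submodule ℂ H} (hN : IsNeutral J N) : FiniteDimensional ℂ N := by
  let f : N →ₗ[ℂ] Module.End.eigenspace (J : H →ₗ[ℂ] H) (-1) :=
    (((J : H →ₗ[ℂ] H) - 1).domRestrict N).codRestrict _ fun n =>
      range_sub_one_le_eigenspace_neg_one (fun x => congr($hJJ x))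
        (LinearMap.mem_range_self _ (n : H))
  refine Module.Finite.of_injective f ?_
  rw [← LinearMap.ker_eq_bot, LinearMap.ker_eq_bot']
  intro n hn
  have hJn : J n = n := sub_eq_zero.mp congr(($hn : H))
  have hnn := hN n n.2
  rw [hJn, inner_self_eq_zero] at hnn
  exact Subtype.ext hnn

theorem mem_kOrth_iff_orthogonalProjectionOnto_eq_zero {J : H →L[ℂ] H} (hJ : IsSelfAdjoint J)
    {R : Submodule ℂ H} [R.HasOrthogonalProjection] {y : H} :
    y ∈ kOrth J R ↔ R.orthogonalProjectionOnto (J y) = 0 := by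
  rw [Submodule.orthogonalProjectionOnto_eq_zero_iff, mem_kOrth, Submodule.mem_orthogonal]
  simp only [← ContinuousLinearMap.coe_coe, hJ.isSymmetric _ _]

theorem inf_kOrth_eq_bot_of_sup_eq {J : H →L[ℂ] H} (hJ : IsSelfAdjoint J)
    {R S : Submodule ℂ H}
    (hsup : R ⊔ (S ⊓ kOrth J S) = S) (hinf : R ⊓ (S ⊓ kOrth J S) = ⊥) :
    R ⊓ kOrth J R = ⊥ := by
  rw [eq_bot_iff]
  rintro r ⟨hrR, hrK⟩
  have hrS : r ∈ S := hsup ▸ Submodule.mem_sup_left hrR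
  have hrKS : r ∈ kOrth J S := by
    rw [← hsup]
    intro s hs
    obtain ⟨a, ha, b, hb, rfl⟩ := Submodule.mem_sup.mp hs
    rw [map_add, inner_add_left, hrK a ha, zero_add, ← ContinuousLinearMap.coe_coe,
      hJ.isSymmetric, ← inner_conj_symm, ContinuousLinearMap.coe_coe, hb.2 r hrS, map_zero]
  exact hinf ▸ ⟨hrR, hrS, hrKS⟩

theorem isRegular_of_inf_kOrth_eq_bot {J : H →L[ℂ] H} (hJ : IsFundSym J)
    (hfin : FiniteDimensional ℂ (Module.End.eigenspace (J : H →ₗ[ℂ] H) (-1)))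
    {R : Submodule ℂ H} (hR : IsClosed (R : Set H)) (hnd : R ⊓ kOrth J R = ⊥) :
    IsRegular J R := by
  have : CompleteSpace R := hR.completeSpace_coe
  let P : H →ₗ[ℂ] R := R.orthogonalProjectionOnto
  let G : Module.End ℂ R := P ∘ₗ (J : H →ₗ[ℂ] H) ∘ₗ R.subtype
  have hG_sub_one : G - 1 = (P ∘ₗ ((J : H →ₗ[ℂ] H) - 1)) ∘ₗ R.subtype := by
    ext r
    simp [G, P, Submodule.orthogonalProjectionOnto_mem_subspace_eq_self]
  have hG_fin : FiniteDimensional ℂ (LinearMap.range (G - 1)) := by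
    refine Submodule.finiteDimensional_of_le
      (S₂ := (Module.End.eigenspace (J : H →ₗ[ℂ] H) (-1)).map P) ?_
    rw [hG_sub_one]
    refine (LinearMap.range_comp_le_range _ _).trans ?_
    rw [LinearMap.range_comp]
    exact Submodule.map_mono (range_sub_one_le_eigenspace_neg_one fun x => congr($(hJ.2) x))
  have hG_inj : Function.Injective G := by
    rw [← LinearMap.ker_eq_bot, LinearMap.ker_eq_bot']
    intro r hr
    have hrK : (r : H) ∈ kOrth J R := (mem_kOrth_iff_orthogonalProjectionOnto_eq_zero hJ.1).mpr hr
    exact Subtype.ext (hnd ▸ ⟨r.2, hrK⟩ : (r : H) ∈ (⊥ : Submodule ℂ H))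
  refine ⟨hR, hnd, eq_top_iff.mpr fun y _ => ?_⟩
  obtain ⟨r, hr⟩ :=
    surjective_of_injective_of_finiteDimensional_range_sub_one hG_fin hG_inj (P (J y))
  have hyr : y - r ∈ kOrth J R := by
    rw [mem_kOrth_iff_orthogonalProjectionOnto_eq_zero hJ.1, map_sub, map_sub]
    exact sub_eq_zero.mpr hr.symm
  simpa using Submodule.add_mem_sup r.2 hyr

/-- every closed subspace of a Pontryagin space (here
`dim H₋ < ∞`) is pseudo-regular. -/
theorem closed_subspace_pontryagin_pseudoRegular (J : H →L[ℂ] H)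
    (hJ : IsFundSym J)
    (hfin : FiniteDimensional ℂ (Module.End.eigenspace (J : H →ₗ[ℂ] H) (-1)))
    (S : Submodule ℂ H) (hSclosed : IsClosed (S : Set H)) :
    ∃ R : Submodule ℂ H, IsRegular J R ∧
      IsNeutral J (S ⊓ kOrth J S) ∧
      AreKOrth J R (S ⊓ kOrth J S) ∧
      S = R ⊔ (S ⊓ kOrth J S) := by
  set N := S ⊓ kOrth J S
  have : FiniteDimensional ℂ N := (isNeutral_inf_kOrth J S).finiteDimensional hJ.2 hfin
  have hsup : Nᗮ ⊓ S ⊔ N = S := by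
    rw [sup_comm]; exact Submodule.sup_orthogonal_inf_of_hasOrthogonalProjection inf_le_left
  have hinf : Nᗮ ⊓ S ⊓ N = ⊥ :=
    eq_bot_iff.mpr fun x hx => N.inf_orthogonal_eq_bot ▸ ⟨hx.2, hx.1.1⟩
  refine ⟨Nᗮ ⊓ S, ?_, isNeutral_inf_kOrth J S, fun r hr n hn => hn.2 r hr.2, hsup.symm⟩
  exact isRegular_of_inf_kOrth_eq_bot hJ hfin (N.isClosed_orthogonal.inter hSclosed)
    (inf_kOrth_eq_bot_of_sup_eq hJ.1 hsup hinf)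

end KreinPaper
end
end

section
/- Let {T_λ}_{λ∈Λ} be bounded operators on a Hilbert space H. Suppose there is C > 0 such that ‖∑_{λ∈F} T_λ‖ ≤ C for every finite subset F ⊆ Λ. Then ∑_{λ∈Λ} ‖T_λ* u‖² ≤ 4C² ‖u‖² for all u ∈ H, and there is a bounded operator W : H → H^Λ (the ℓ²-direct sum), Wu = (T_λ* u)_λ, with ‖W‖ ≤ 2C; consequently its adjoint T = W* : H^Λ → H satisfies T((x_λ)_λ) = ∑_λ T_λ x_λ (unconditionally convergent) for every (x_λ) ∈ H^Λ. -/
/-!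
Signs `ε_λ = ±1` can be chosen greedily so that `∑_F ‖y_λ‖² ≤ ‖∑_F ε_λ y_λ‖²`: by the
parallelogram law one of `‖s + y‖²`, `‖s - y‖²` is at least `‖s‖² + ‖y‖²`. For `y_λ = T_λ* u`
the signed sum is `(∑_S T_λ - ∑_{F \ S} T_λ)* u`, of norm at most `2C‖u‖`. Hence
`W u = (T_λ* u)_λ` is a bounded map into `ℓ²` with `‖W‖ ≤ 2C`, and since `W*` sends the
vector `v` placed at coordinate `λ` to `T_λ v`, continuity of `W*` gives
`W* x = ∑_λ T_λ x_λ`.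
-/

open ContinuousLinearMap

noncomputable section

namespace KreinPaper

variable {H : Type*} [NormedAddCommGroup H] [InnerProductSpace ℂ H] [CompleteSpace H]

theorem sq_norm_add_sq_norm_le_or (𝕜 : Type*) {E : Type*} [RCLike 𝕜] [NormedAddCommGroup E]
    [InnerProductSpace 𝕜 E] (x y : E) :
    ‖x‖ ^ 2 + ‖y‖ ^ 2 ≤ ‖x + y‖ ^ 2 ∨ ‖x‖ ^ 2 + ‖y‖ ^ 2 ≤ ‖x - y‖ ^ 2 := by
  by_contra! h
  linarith [parallelogram_law_with_norm 𝕜 x y]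

theorem exists_subset_sum_sq_norm_le (𝕜 : Type*) {E ι : Type*} [RCLike 𝕜] [NormedAddCommGroup E]
    [InnerProductSpace 𝕜 E] [DecidableEq ι] (y : ι → E) (F : Finset ι) :
    ∃ S ⊆ F, ∑ i ∈ F, ‖y i‖ ^ 2 ≤ ‖∑ i ∈ S, y i - ∑ i ∈ F \ S, y i‖ ^ 2 := by
  induction F using Finset.induction_on with
  | empty => exact ⟨∅, subset_refl _, by simp⟩
  | insert a F ha ih =>
    obtain ⟨S, hS, hle⟩ := ih
    have haS : a ∉ S := fun h => ha (hS h)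
    rw [Finset.sum_insert ha]
    rcases sq_norm_add_sq_norm_le_or 𝕜 (∑ i ∈ S, y i - ∑ i ∈ F \ S, y i) (y a) with hadd | hsub
    · refine ⟨insert a S, Finset.insert_subset_insert a hS, ?_⟩
      rw [Finset.insert_sdiff_insert, Finset.sdiff_insert_of_notMem ha, Finset.sum_insert haS,
        add_sub_assoc, add_comm (y a)]
      linarith
    · refine ⟨S, hS.trans (Finset.subset_insert a F), ?_⟩
      rw [Finset.insert_sdiff_of_notMem F haS,
        Finset.sum_insert fun h => ha (Finset.mem_sdiff.1 h).1, ← sub_sub, sub_right_comm]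
      linarith

section RowBound

variable {𝕜 E F ι : Type*} [RCLike 𝕜] [NormedAddCommGroup E] [InnerProductSpace 𝕜 E]
  [CompleteSpace E] [NormedAddCommGroup F] [InnerProductSpace 𝕜 F] [CompleteSpace F]

theorem sum_sq_norm_adjoint_apply_le {T : ι → E →L[𝕜] F} {C : ℝ}
    (hbd : ∀ s : Finset ι, ‖∑ i ∈ s, T i‖ ≤ C) (u : F) (s : Finset ι) :
    ∑ i ∈ s, ‖adjoint (T i) u‖ ^ 2 ≤ 4 * C ^ 2 * ‖u‖ ^ 2 := by
  classical
  obtain ⟨S, -, hle⟩ := exists_subset_sum_sq_norm_le 𝕜 (fun i => adjoint (T i) u) s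
  have hsigned : ∑ i ∈ S, adjoint (T i) u - ∑ i ∈ s \ S, adjoint (T i) u
      = adjoint (∑ i ∈ S, T i - ∑ i ∈ s \ S, T i) u := by
    simp only [map_sub, map_sum, sub_apply, sum_apply]
  have hnorm : ‖adjoint (∑ i ∈ S, T i - ∑ i ∈ s \ S, T i) u‖ ≤ 2 * C * ‖u‖ := by
    refine (le_opNorm _ _).trans (mul_le_mul_of_nonneg_right ?_ (norm_nonneg u))
    rw [LinearIsometryEquiv.norm_map]
    linarith [norm_sub_le (∑ i ∈ S, T i) (∑ i ∈ s \ S, T i), hbd S, hbd (s \ S)]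
  calc ∑ i ∈ s, ‖adjoint (T i) u‖ ^ 2
      ≤ ‖adjoint (∑ i ∈ S, T i - ∑ i ∈ s \ S, T i) u‖ ^ 2 := hsigned ▸ hle
    _ ≤ (2 * C * ‖u‖) ^ 2 := pow_le_pow_left₀ (norm_nonneg _) hnorm 2
    _ = 4 * C ^ 2 * ‖u‖ ^ 2 := by ring

end RowBound

section ColumnOperator

variable {𝕜 E ι : Type*} {G : ι → Type*} [RCLike 𝕜]

section Normed

variable [NormedAddCommGroup E] [NormedSpace 𝕜 E] [∀ i, NormedAddCommGroup (G i)]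
  [∀ i, NormedSpace 𝕜 (G i)]

def lpColumn (A : ∀ i, E →L[𝕜] G i) {M : ℝ} (hM : 0 ≤ M)
    (hA : ∀ (u : E) (s : Finset ι), ∑ i ∈ s, ‖A i u‖ ^ 2 ≤ (M * ‖u‖) ^ 2) :
    E →L[𝕜] lp G 2 :=
  LinearMap.mkContinuous
    { toFun := fun u => ⟨fun i => A i u, memℓp_gen' (C := (M * ‖u‖) ^ 2) (by simpa using hA u)⟩
      map_add' := fun u v => lp.ext (funext fun i => map_add (A i) u v)
      map_smul' := fun c u => lp.ext (funext fun i => map_smul (A i) c u) }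
    M fun u => lp.norm_le_of_forall_sum_le (by norm_num) (by positivity) (by simpa using hA u)

variable (A : ∀ i, E →L[𝕜] G i) {M : ℝ} (hM : 0 ≤ M)
  (hA : ∀ (u : E) (s : Finset ι), ∑ i ∈ s, ‖A i u‖ ^ 2 ≤ (M * ‖u‖) ^ 2)

@[simp]
theorem lpColumn_apply (u : E) (i : ι) : (lpColumn A hM hA u : ∀ i, G i) i = A i u :=
  rfl

theorem norm_lpColumn_le : ‖lpColumn A hM hA‖ ≤ M :=
  LinearMap.mkContinuous_norm_le _ hM _

end Normed

variable [NormedAddCommGroup E] [InnerProductSpace 𝕜 E] [CompleteSpace E]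
  [∀ i, NormedAddCommGroup (G i)] [∀ i, InnerProductSpace 𝕜 (G i)] [∀ i, CompleteSpace (G i)]
  (A : ∀ i, E →L[𝕜] G i) {M : ℝ} (hM : 0 ≤ M)
  (hA : ∀ (u : E) (s : Finset ι), ∑ i ∈ s, ‖A i u‖ ^ 2 ≤ (M * ‖u‖) ^ 2)

theorem adjoint_lpColumn_single [DecidableEq ι] (i : ι) (v : G i) :
    adjoint (lpColumn A hM hA) (lp.single 2 i v) = adjoint (A i) v :=
  ext_inner_right 𝕜 fun u => by
    rw [adjoint_inner_left, lp.inner_single_left, lpColumn_apply, adjoint_inner_left]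

theorem hasSum_adjoint_lpColumn (x : lp G 2) :
    HasSum (fun i => adjoint (A i) (x i)) (adjoint (lpColumn A hM hA) x) := by
  classical
  simpa only [adjoint_lpColumn_single] using
    (lp.hasSum_single ENNReal.ofNat_ne_top x).mapL (adjoint (lpColumn A hM hA))

end ColumnOperator

theorem bounded_partial_sums_gives_row_operator_general {Λ : Type*}
    (T : Λ → H →L[ℂ] H) (C : ℝ)
    (hbd : ∀ F : Finset Λ, ‖∑ lam ∈ F, T lam‖ ≤ C) :
    (∀ u : H, ∀ F : Finset Λ,
        ∑ lam ∈ F, ‖ContinuousLinearMap.adjoint (T lam) u‖ ^ 2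
          ≤ 4 * C ^ 2 * ‖u‖ ^ 2) ∧
    ∃ W : H →L[ℂ] lp (fun _ : Λ => H) 2,
      (∀ (u : H) (lam : Λ),
          (W u : ∀ _ : Λ, H) lam = ContinuousLinearMap.adjoint (T lam) u) ∧
      ‖W‖ ≤ 2 * C ∧
      ∀ x : lp (fun _ : Λ => H) 2,
        HasSum (fun lam => T lam ((x : ∀ _ : Λ, H) lam))
          (ContinuousLinearMap.adjoint W x) := by
  have key := sum_sq_norm_adjoint_apply_le hbd
  have h2C : 0 ≤ 2 * C := by simpa using hbd ∅
  have hcol : ∀ (u : H) (s : Finset Λ), ∑ i ∈ s, ‖adjoint (T i) u‖ ^ 2 ≤ (2 * C * ‖u‖) ^ 2 :=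
    fun u s => (key u s).trans_eq (by ring)
  refine ⟨key, lpColumn (fun i => adjoint (T i)) h2C hcol, fun _ _ => rfl,
    norm_lpColumn_le _ h2C hcol, fun x => ?_⟩
  simpa only [adjoint_adjoint] using hasSum_adjoint_lpColumn _ h2C hcol x

/-- a uniform bound `C` on finite sums of the `T_λ` gives
`∑ ‖T_λ* u‖² ≤ 4C²‖u‖²`, hence a bounded operator `W : H → H^Λ`,
`Wu = (T_λ* u)_λ`, with `‖W‖ ≤ 2C`, whose adjoint implements
`(x_λ) ↦ ∑ T_λ x_λ` (unconditionally convergent). -/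
theorem bounded_partial_sums_gives_row_operator {Λ : Type*}
    (T : Λ → H →L[ℂ] H) (C : ℝ) (hC : 0 < C)
    (hbd : ∀ F : Finset Λ, ‖∑ lam ∈ F, T lam‖ ≤ C) :
    (∀ u : H, ∀ F : Finset Λ,
        ∑ lam ∈ F, ‖ContinuousLinearMap.adjoint (T lam) u‖ ^ 2
          ≤ 4 * C ^ 2 * ‖u‖ ^ 2) ∧
    ∃ W : H →L[ℂ] lp (fun _ : Λ => H) 2,
      (∀ (u : H) (lam : Λ),
          (W u : ∀ _ : Λ, H) lam = ContinuousLinearMap.adjoint (T lam) u) ∧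
      ‖W‖ ≤ 2 * C ∧
      ∀ x : lp (fun _ : Λ => H) 2,
        HasSum (fun lam => T lam ((x : ∀ _ : Λ, H) lam))
          (ContinuousLinearMap.adjoint W x) :=
  bounded_partial_sums_gives_row_operator_general T C hbd

end KreinPaper
end
end

section
/- Let H be a Hilbert space and {P_d}_{d∈D} a net of bounded (not necessarily orthogonal) projections (P_d² = P_d) satisfying P_d P_{d'} = P_{d'} P_d = P_d whenever d' ≥ d, and ‖P_d‖ ≤ C for all d ∈ D. Let M = closure of the span of ⋃_d ran P_d and N = ⋂_d ker P_d. Then H = M ⊕ N (direct sum), the net P_d converges strongly to the bounded projection P with range M and kernel N, i.e. lim_d P_d f = P f for every f ∈ H. -/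
/-!
Let `M` be the closed span of the ranges and `N` the common kernel. Every vector of `⋃ ran P_d`
is fixed by `P_d` for all large `d`, so by the uniform bound `P_d m → m` for every `m ∈ M`. Hence
`M ⊓ N = 0` and `‖m‖ ≤ C ‖m + n‖` for `m ∈ M`, `n ∈ N`, which makes `M ⊔ N` closed. It is also
dense: `Mᗮ` is the common kernel and `Nᗮ` the closed span of the ranges of the adjoint net
`P_d†`, again increasing and bounded by `C`, so `(M ⊔ N)ᗮ = Mᗮ ⊓ Nᗮ = 0` by the first step. So `H = M ⊕ N` topologically, and for the
projection `Q` onto `M` along `N` we get `P_d f = P_d (Q f) → Q f`.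
-/

open ContinuousLinearMap

noncomputable section

namespace KreinPaper

variable {H : Type*} [NormedAddCommGroup H] [InnerProductSpace ℂ H] [CompleteSpace H]

open Filter Topology Submodule
open scoped InnerProduct

section Normed

variable {𝕜 E D : Type*} [NontriviallyNormedField 𝕜] [NormedAddCommGroup E] [NormedSpace 𝕜 E]

theorem _root_.Submodule.isClosed_sup_of_norm_le_mul_norm_add [CompleteSpace E]
    {M N : Submodule 𝕜 E} (hM : IsClosed (M : Set E)) (hN : IsClosed (N : Set E)) {C : ℝ}
    (hC : ∀ m ∈ M, ∀ n ∈ N, ‖m‖ ≤ C * ‖m + n‖) : IsClosed ((M ⊔ N : Submodule 𝕜 E) : Set E) := by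
  have := hM.completeSpace_coe
  have := hN.completeSpace_coe
  let f : M × N →L[𝕜] E := M.subtypeL.coprod N.subtypeL
  have hbound : ∀ x : M × N, ‖x‖ ≤ (C + 1).toNNReal * ‖f x‖ := by
    rintro ⟨⟨m, hm⟩, ⟨n, hn⟩⟩
    have hmn : ‖m‖ ≤ C * ‖m + n‖ := hC m hm n hn
    have hn' : ‖n‖ ≤ ‖m + n‖ + ‖m‖ := by simpa using norm_sub_le (m + n) m
    have hK : (C + 1) * ‖m + n‖ ≤ (C + 1).toNNReal * ‖m + n‖ := by
      gcongr
      exact Real.le_coe_toNNReal _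
    change max ‖m‖ ‖n‖ ≤ _ * ‖m + n‖
    rw [max_le_iff]
    constructor <;> nlinarith [norm_nonneg (m + n)]
  rw [sup_eq_range]
  exact (f.antilipschitz_of_bound hbound).isClosed_range f.uniformContinuous

def limitRange (P : D → E →L[𝕜] E) : Submodule 𝕜 E :=
  (⨆ d, (P d).range).topologicalClosure

def commonKer (P : D → E →L[𝕜] E) : Submodule 𝕜 E :=
  ⨅ d, (P d).ker

theorem mem_commonKer {P : D → E →L[𝕜] E} {x : E} : x ∈ commonKer P ↔ ∀ d, P d x = 0 :=
  mem_iInf _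

theorem isClosed_limitRange (P : D → E →L[𝕜] E) : IsClosed (limitRange P : Set E) :=
  isClosed_topologicalClosure _

theorem isClosed_commonKer (P : D → E →L[𝕜] E) : IsClosed (commonKer P : Set E) := by
  rw [commonKer, coe_iInf]
  exact isClosed_iInter fun d => (P d).isClosed_ker

variable [Preorder D]

def IsIncreasingProjectionNet (P : D → E →L[𝕜] E) : Prop :=
  ∀ d d', d ≤ d' → P d' ∘L P d = P d ∧ P d ∘L P d' = P d

namespace IsIncreasingProjectionNet

variable {P : D → E →L[𝕜] E}

theorem apply_eq_self_of_mem_range (hP : IsIncreasingProjectionNet P) {d d' : D} (h : d ≤ d')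
    {x : E} (hx : x ∈ (P d).range) : P d' x = x := by
  obtain ⟨y, rfl⟩ := hx
  exact DFunLike.congr_fun (hP d d' h).1 y

theorem monotone_range (hP : IsIncreasingProjectionNet P) : Monotone fun d => (P d).range :=
  fun _ _ h x hx => ⟨x, hP.apply_eq_self_of_mem_range h hx⟩

variable [Nonempty D] [IsDirected D (· ≤ ·)]

theorem eventually_apply_eq_self (hP : IsIncreasingProjectionNet P) {x : E}
    (hx : x ∈ ⨆ d, (P d).range) : (fun d => P d x) =ᶠ[atTop] fun _ => x := by
  obtain ⟨d₀, hd₀⟩ := (mem_iSup_of_directed _ hP.monotone_range.directed_le).mp hx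
  exact eventually_atTop.mpr ⟨d₀, fun _ hd => hP.apply_eq_self_of_mem_range hd hd₀⟩

variable {C : ℝ}

theorem tendsto_apply_of_mem_limitRange (hP : IsIncreasingProjectionNet P)
    (hC : ∀ d, ‖P d‖ ≤ C) {x : E} (hx : x ∈ limitRange P) :
    Tendsto (fun d => P d x) atTop (𝓝 x) := by
  have hequi : Equicontinuous ((↑) ∘ P : D → E → E) :=
    ((NormedSpace.equicontinuous_TFAE P).out 5 1).mp (⟨C, hC⟩ : ∃ C, ∀ d, ‖P d‖ ≤ C)
  refine (hequi x).tendsto_of_mem_closure (f := id)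
    (tendsto_nhdsWithin_of_tendsto_nhds tendsto_id)
    (fun y hy => tendsto_const_nhds.congr' (hP.eventually_apply_eq_self hy).symm) ?_
  rwa [← topologicalClosure_coe]

theorem limitRange_inf_commonKer_eq_bot (hP : IsIncreasingProjectionNet P)
    (hC : ∀ d, ‖P d‖ ≤ C) :
    limitRange P ⊓ commonKer P = ⊥ := by
  rw [eq_bot_iff]
  rintro x ⟨hxM, hxN⟩
  have hzero : Tendsto (fun d => P d x) atTop (𝓝 0) := by
    simp [mem_commonKer.mp hxN]
  exact (tendsto_nhds_unique (hP.tendsto_apply_of_mem_limitRange hC hxM) hzero : x = 0)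

theorem norm_le_mul_norm_add (hP : IsIncreasingProjectionNet P) (hC : ∀ d, ‖P d‖ ≤ C)
    {m n : E} (hm : m ∈ limitRange P) (hn : n ∈ commonKer P) : ‖m‖ ≤ C * ‖m + n‖ := by
  refine le_of_tendsto (hP.tendsto_apply_of_mem_limitRange hC hm).norm
    (Eventually.of_forall fun d => ?_)
  calc ‖P d m‖ = ‖P d (m + n)‖ := by rw [map_add, mem_commonKer.mp hn, add_zero]
    _ ≤ ‖P d‖ * ‖m + n‖ := (P d).le_opNorm _
    _ ≤ C * ‖m + n‖ := by gcongr; exact hC d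

theorem isClosed_limitRange_sup_commonKer [CompleteSpace E] (hP : IsIncreasingProjectionNet P)
    (hC : ∀ d, ‖P d‖ ≤ C) : IsClosed ((limitRange P ⊔ commonKer P : Submodule 𝕜 E) : Set E) :=
  isClosed_sup_of_norm_le_mul_norm_add (isClosed_limitRange P) (isClosed_commonKer P)
    fun _ hm _ hn => hP.norm_le_mul_norm_add hC hm hn

end IsIncreasingProjectionNet

end Normed

section Hilbert

variable {𝕜 E D : Type*} [RCLike 𝕜] [NormedAddCommGroup E] [InnerProductSpace 𝕜 E]
  [CompleteSpace E]

theorem orthogonal_limitRange (P : D → E →L[𝕜] E) :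
    (limitRange P)ᗮ = commonKer fun d => (P d)† := by
  rw [limitRange, orthogonal_closure, ← iInf_orthogonal]
  simp_rw [orthogonal_range]
  rfl

theorem orthogonal_commonKer (P : D → E →L[𝕜] E) :
    (commonKer P)ᗮ = limitRange fun d => (P d)† := by
  have hker : commonKer P = (⨆ d, (P d)†.range)ᗮ := by
    rw [← iInf_orthogonal]
    simp_rw [orthogonal_range, adjoint_adjoint]
    rfl
  rw [hker, orthogonal_orthogonal_eq_closure]
  rfl

variable [Preorder D] {P : D → E →L[𝕜] E}

namespace IsIncreasingProjectionNet

theorem adjoint (hP : IsIncreasingProjectionNet P) : IsIncreasingProjectionNet fun d => (P d)† :=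
  fun d d' h => ⟨by rw [← adjoint_comp, (hP d d' h).2], by rw [← adjoint_comp, (hP d d' h).1]⟩

variable [Nonempty D] [IsDirected D (· ≤ ·)] {C : ℝ}

theorem topologicalClosure_limitRange_sup_commonKer_eq_top (hP : IsIncreasingProjectionNet P)
    (hC : ∀ d, ‖P d‖ ≤ C) : (limitRange P ⊔ commonKer P).topologicalClosure = ⊤ := by
  rw [topologicalClosure_eq_top_iff, ← inf_orthogonal, orthogonal_limitRange,
    orthogonal_commonKer, inf_comm]
  refine hP.adjoint.limitRange_inf_commonKer_eq_bot (C := C) fun d => ?_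
  rw [LinearIsometryEquiv.norm_map]
  exact hC d

theorem limitRange_sup_commonKer_eq_top (hP : IsIncreasingProjectionNet P)
    (hC : ∀ d, ‖P d‖ ≤ C) :
    limitRange P ⊔ commonKer P = ⊤ := by
  rw [← (hP.isClosed_limitRange_sup_commonKer hC).submodule_topologicalClosure_eq]
  exact hP.topologicalClosure_limitRange_sup_commonKer_eq_top hC

theorem isTopCompl (hP : IsIncreasingProjectionNet P) (hC : ∀ d, ‖P d‖ ≤ C) :
    IsTopCompl (limitRange P) (commonKer P) :=
  IsCompl.isTopCompl_of_isClosed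
    ⟨disjoint_iff.mpr (hP.limitRange_inf_commonKer_eq_bot hC),
      codisjoint_iff.mpr (hP.limitRange_sup_commonKer_eq_top hC)⟩
    (isClosed_limitRange P) (isClosed_commonKer P)

theorem tendsto_apply_projectionL (hP : IsIncreasingProjectionNet P) (hC : ∀ d, ‖P d‖ ≤ C)
    (f : E) :
    Tendsto (fun d => P d f) atTop (𝓝 (projectionL _ _ (hP.isTopCompl hC) f)) := by
  set Q := projectionL _ _ (hP.isTopCompl hC)
  have hker : f - Q f ∈ commonKer P :=
    projectionL_eq_self_sub_projectionL (hP.isTopCompl hC) f ▸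
      projectionL_apply_mem (hP.isTopCompl hC).symm f
  refine (hP.tendsto_apply_of_mem_limitRange hC (projectionL_apply_mem _ f)).congr fun d => ?_
  rw [eq_comm, ← sub_eq_zero, ← map_sub, mem_commonKer.mp hker d]

end IsIncreasingProjectionNet

end Hilbert

theorem net_of_projections_converges_general {D : Type*} [Nonempty D] [Preorder D]
    [IsDirected D (· ≤ ·)] (P : D → H →L[ℂ] H)
    (hmono : ∀ d d', d ≤ d' → P d' ∘L P d = P d ∧ P d ∘L P d' = P d)
    (C : ℝ) (hC : ∀ d, ‖P d‖ ≤ C) :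
    (⨆ d, LinearMap.range (P d : H →ₗ[ℂ] H)).topologicalClosure ⊓ (⨅ d, LinearMap.ker (P d : H →ₗ[ℂ] H)) = ⊥ ∧
    (⨆ d, LinearMap.range (P d : H →ₗ[ℂ] H)).topologicalClosure ⊔ (⨅ d, LinearMap.ker (P d : H →ₗ[ℂ] H)) = ⊤ ∧
    ∃ Q : H →L[ℂ] H, Q ∘L Q = Q ∧
      LinearMap.range (Q : H →ₗ[ℂ] H) = (⨆ d, LinearMap.range (P d : H →ₗ[ℂ] H)).topologicalClosure ∧
      LinearMap.ker (Q : H →ₗ[ℂ] H) = (⨅ d, LinearMap.ker (P d : H →ₗ[ℂ] H)) ∧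
      ∀ f : H, Filter.Tendsto (fun d => P d f) Filter.atTop (nhds (Q f)) := by
  have hP : IsIncreasingProjectionNet P := hmono
  have hcompl := hP.isTopCompl hC
  exact ⟨hP.limitRange_inf_commonKer_eq_bot hC, hP.limitRange_sup_commonKer_eq_top hC,
    projectionL _ _ hcompl, isIdempotentElem_projectionL hcompl, range_projectionL hcompl,
    ker_projectionL hcompl, hP.tendsto_apply_projectionL hC⟩

/-- a uniformly bounded increasing net of (not necessarily
orthogonal) projections converges strongly to the projection onto
`M = closure (span ⋃ ran P_d)` along `N = ⋂ ker P_d`, and `H = M ⊕ N`. -/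
theorem net_of_projections_converges {D : Type*} [Nonempty D] [Preorder D]
    [IsDirected D (· ≤ ·)] (P : D → H →L[ℂ] H)
    (hproj : ∀ d, P d ∘L P d = P d)
    (hmono : ∀ d d', d ≤ d' → P d' ∘L P d = P d ∧ P d ∘L P d' = P d)
    (C : ℝ) (hC : ∀ d, ‖P d‖ ≤ C) :
    (⨆ d, LinearMap.range (P d : H →ₗ[ℂ] H)).topologicalClosure ⊓ (⨅ d, LinearMap.ker (P d : H →ₗ[ℂ] H)) = ⊥ ∧
    (⨆ d, LinearMap.range (P d : H →ₗ[ℂ] H)).topologicalClosure ⊔ (⨅ d, LinearMap.ker (P d : H →ₗ[ℂ] H)) = ⊤ ∧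
    ∃ Q : H →L[ℂ] H, Q ∘L Q = Q ∧
      LinearMap.range (Q : H →ₗ[ℂ] H) = (⨆ d, LinearMap.range (P d : H →ₗ[ℂ] H)).topologicalClosure ∧
      LinearMap.ker (Q : H →ₗ[ℂ] H) = (⨅ d, LinearMap.ker (P d : H →ₗ[ℂ] H)) ∧
      ∀ f : H, Filter.Tendsto (fun d => P d f) Filter.atTop (nhds (Q f)) :=
  net_of_projections_converges_general P hmono C hC

end KreinPaper
end
end

section
/- In the setting of the previous statement, assume additionally that H carries a Kreĭn space structure (fundamental symmetry J, indefinite adjoint A* = J A^{*_Hilbert} J) and each P_d is a normal projection: P_d* P_d = P_d P_d*, where * is the indefinite adjoint. Then the strong limit P of the net is also a normal projection, P_d* → P* strongly, ran P* = closed span of ⋃_d ran P_d*, and ker P* = ⋂_d ker P_d*. -/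
open ContinuousLinearMap

noncomputable section

namespace KreinPaper

variable {H : Type*} [NormedAddCommGroup H] [InnerProductSpace ℂ H] [CompleteSpace H]

/-!
Since `P_d* = (J P_d J)†` and `J P_d J → J Q J` strongly, `ker (J Q J) ⊇ ⋂ ker (J P_d J)`;
taking orthogonal complements puts `ran Q*` inside the closed span `V` of the `ran P_d*`. The
`P_d*` form a uniformly bounded increasing net of projections, so they converge strongly to the
identity on `V`; together with `P_d* Q* = P_d*` this gives `P_d* → Q*` strongly, and the range
and kernel identities follow. Finally, normality of `A` amounts to `[A* f, A* g] = [A f, A g]`,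
an identity that passes to the strong limit.
-/

open Filter Topology

section NetsOfOperators

variable {𝕜 E F ι : Type*} [NontriviallyNormedField 𝕜]
  [NormedAddCommGroup E] [NormedSpace 𝕜 E] [NormedAddCommGroup F] [NormedSpace 𝕜 F]

theorem comp_eq_of_tendsto {l : Filter ι} [l.NeBot] {T : ι → F →L[𝕜] F} {S : F →L[𝕜] F}
    {A : E →L[𝕜] F} (hlim : ∀ x, Tendsto (fun i => T i x) l (𝓝 (S x)))
    (hA : ∀ᶠ i in l, T i ∘L A = A) : S ∘L A = A := by
  ext x
  refine tendsto_nhds_unique (hlim (A x)) (tendsto_const_nhds.congr' ?_)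
  filter_upwards [hA] with i hi
  rw [← comp_apply, hi]

theorem iInf_ker_le_ker_of_tendsto {l : Filter ι} [l.NeBot] {T : ι → E →L[𝕜] F}
    {S : E →L[𝕜] F} (hlim : ∀ x, Tendsto (fun i => T i x) l (𝓝 (S x))) :
    ⨅ i, LinearMap.ker (T i : E →ₗ[𝕜] F) ≤ LinearMap.ker (S : E →ₗ[𝕜] F) := by
  intro x hx
  simp only [Submodule.mem_iInf, LinearMap.mem_ker, coe_coe] at hx ⊢
  exact tendsto_nhds_unique (hlim x) (by simp only [hx, tendsto_const_nhds])

theorem ker_eq_iInf_ker_of_tendsto {l : Filter ι} [l.NeBot] {T : ι → E →L[𝕜] E}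
    {S : E →L[𝕜] E} (hlim : ∀ x, Tendsto (fun i => T i x) l (𝓝 (S x)))
    (hcomp : ∀ i, T i ∘L S = T i) :
    LinearMap.ker (S : E →ₗ[𝕜] E) = ⨅ i, LinearMap.ker (T i : E →ₗ[𝕜] E) := by
  refine le_antisymm (fun x hx => ?_) (iInf_ker_le_ker_of_tendsto hlim)
  simp only [Submodule.mem_iInf, LinearMap.mem_ker, coe_coe] at hx ⊢
  intro i
  rw [← hcomp i, comp_apply, hx, map_zero]

/-- The points of strong convergence form a closed set by equicontinuity, and each point of a
range is eventually fixed. -/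
theorem tendsto_apply_self_of_mem_closure_iSup_range [Nonempty ι] [Preorder ι]
    [IsDirected ι (· ≤ ·)] {T : ι → E →L[𝕜] E} {C : ℝ} (hC : ∀ i, ‖T i‖ ≤ C)
    (hmono : ∀ i j, i ≤ j → T j ∘L T i = T i) {x : E}
    (hx : x ∈ (⨆ i, LinearMap.range (T i : E →ₗ[𝕜] E)).topologicalClosure) :
    Tendsto (fun i => T i x) atTop (𝓝 x) := by
  have hequi : Equicontinuous ((↑) ∘ T : ι → E → E) :=
    ((NormedSpace.equicontinuous_TFAE T).out 5 1).mp (⟨C, hC⟩ : ∃ C, ∀ i, ‖T i‖ ≤ C)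
  have hclosed : IsClosed {x : E | Tendsto (fun i => T i x) atTop (𝓝 x)} :=
    hequi.isClosed_setOfPred_tendsto continuous_id
  have hfix : ∀ i j, i ≤ j → ∀ y, T j (T i y) = T i y := fun i j hij y => by
    rw [← comp_apply, hmono i j hij]
  have hdir : Directed (· ≤ ·) fun i => LinearMap.range (T i : E →ₗ[𝕜] E) :=
    Monotone.directed_le fun i j hij => by
      rintro _ ⟨y, rfl⟩
      exact ⟨T i y, hfix i j hij y⟩
  rw [← SetLike.mem_coe, Submodule.topologicalClosure_coe,
    Submodule.coe_iSup_of_directed _ hdir] at hx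
  refine closure_minimal ?_ hclosed hx
  simp only [Set.iUnion_subset_iff]
  rintro i _ ⟨y, rfl⟩
  exact tendsto_const_nhds.congr' ((eventually_ge_atTop i).mono fun j hij => (hfix i j hij y).symm)

end NetsOfOperators

theorem range_adjoint_le_closure_iSup_range_adjoint {𝕜 E F ι : Type*} [RCLike 𝕜]
    [NormedAddCommGroup E] [InnerProductSpace 𝕜 E] [CompleteSpace E]
    [NormedAddCommGroup F] [InnerProductSpace 𝕜 F] [CompleteSpace F]
    {l : Filter ι} [l.NeBot] {T : ι → E →L[𝕜] F} {S : E →L[𝕜] F}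
    (hlim : ∀ x, Tendsto (fun i => T i x) l (𝓝 (S x))) :
    LinearMap.range (adjoint S : F →ₗ[𝕜] E)
      ≤ (⨆ i, LinearMap.range (adjoint (T i) : F →ₗ[𝕜] E)).topologicalClosure := by
  rw [← Submodule.orthogonal_orthogonal_eq_closure, ← Submodule.iInf_orthogonal]
  simp only [orthogonal_range, adjoint_adjoint]
  calc LinearMap.range (adjoint S : F →ₗ[𝕜] E)
      ≤ (LinearMap.range (adjoint S : F →ₗ[𝕜] E)).topologicalClosure :=
        Submodule.le_topologicalClosure _
    _ = (LinearMap.ker (S : E →ₗ[𝕜] F))ᗮ := (orthogonal_ker S).symm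
    _ ≤ _ := Submodule.orthogonal_le (iInf_ker_le_ker_of_tendsto hlim)

section Krein

variable {J : H →L[ℂ] H}

theorem IsFundSym.apply_apply (hJ : IsFundSym J) (x : H) : J (J x) = x :=
  congr($(hJ.2) x)

theorem IsFundSym.inner_apply_left (hJ : IsFundSym J) (x y : H) :
    inner ℂ (J x) y = inner ℂ x (J y) := by
  rw [← adjoint_inner_left, hJ.1.adjoint_eq]

theorem kAdj_eq_adjoint_conj (hJ : IsFundSym J) (A : H →L[ℂ] H) :
    kAdj J A = adjoint (J ∘L A ∘L J) := by
  simp only [kAdj, adjoint_comp, hJ.1.adjoint_eq, comp_assoc]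

theorem kAdj_comp (hJ : IsFundSym J) (A B : H →L[ℂ] H) :
    kAdj J (A ∘L B) = kAdj J B ∘L kAdj J A := by
  ext x
  simp only [kAdj, adjoint_comp, comp_apply, hJ.apply_apply]

theorem norm_kAdj_le (A : H →L[ℂ] H) : ‖kAdj J A‖ ≤ ‖J‖ * ‖A‖ * ‖J‖ :=
  calc ‖kAdj J A‖ ≤ ‖J‖ * (‖adjoint A‖ * ‖J‖) :=
        (opNorm_comp_le _ _).trans (mul_le_mul_of_nonneg_left (opNorm_comp_le _ _) (norm_nonneg _))
    _ = ‖J‖ * ‖A‖ * ‖J‖ := by rw [LinearIsometryEquiv.norm_map, mul_assoc]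

theorem inner_apply_kAdj (hJ : IsFundSym J) (A : H →L[ℂ] H) (x y : H) :
    inner ℂ (J x) (kAdj J A y) = inner ℂ (J (A x)) y := by
  rw [kAdj, comp_apply, comp_apply, ← hJ.inner_apply_left, hJ.apply_apply, adjoint_inner_right,
    hJ.inner_apply_left]

theorem inner_kAdj_apply (hJ : IsFundSym J) (A : H →L[ℂ] H) (x y : H) :
    inner ℂ (J (kAdj J A x)) y = inner ℂ (J x) (A y) := by
  rw [kAdj, comp_apply, comp_apply, hJ.apply_apply, adjoint_inner_left, hJ.inner_apply_left]

theorem comp_kAdj_comm_iff (hJ : IsFundSym J) (A : H →L[ℂ] H) :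
    A ∘L kAdj J A = kAdj J A ∘L A ↔ ∀ f g,
      inner ℂ (J (kAdj J A f)) (kAdj J A g) = inner ℂ (J (A f)) (A g) := by
  have hgram : ∀ f g, inner ℂ (J (kAdj J A f)) (kAdj J A g) = inner ℂ (J (A f)) (A g) ↔
      inner ℂ (J ((A ∘L kAdj J A) f)) g = inner ℂ (J ((kAdj J A ∘L A) f)) g := fun f g => by
    rw [comp_apply, comp_apply, inner_apply_kAdj hJ, inner_kAdj_apply hJ]
  simp only [hgram]
  refine ⟨fun h f g => by rw [h], fun h => ext fun f => ?_⟩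
  rw [← hJ.apply_apply ((A ∘L kAdj J A) f), ext_inner_right ℂ (h f), hJ.apply_apply]

end Krein

theorem net_of_normal_projections_limit_normal_general {D : Type*} [Nonempty D]
    [Preorder D] [IsDirected D (· ≤ ·)] (J : H →L[ℂ] H) (hJ : IsFundSym J)
    (P : D → H →L[ℂ] H)
    (hmono : ∀ d d', d ≤ d' → P d' ∘L P d = P d ∧ P d ∘L P d' = P d)
    (C : ℝ) (hC : ∀ d, ‖P d‖ ≤ C)
    (hnorm : ∀ d, P d ∘L kAdj J (P d) = kAdj J (P d) ∘L P d)
    (Q : H →L[ℂ] H)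
    (hQlim : ∀ f : H, Filter.Tendsto (fun d => P d f) Filter.atTop (nhds (Q f))) :
    Q ∘L kAdj J Q = kAdj J Q ∘L Q ∧
    (∀ f : H, Filter.Tendsto (fun d => kAdj J (P d) f) Filter.atTop
        (nhds (kAdj J Q f))) ∧
    LinearMap.range (kAdj J Q : H →ₗ[ℂ] H)
      = (⨆ d, LinearMap.range (kAdj J (P d) : H →ₗ[ℂ] H)).topologicalClosure ∧
    LinearMap.ker (kAdj J Q : H →ₗ[ℂ] H) = ⨅ d, LinearMap.ker (kAdj J (P d) : H →ₗ[ℂ] H) := by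
  have hQP : ∀ d, Q ∘L P d = P d := fun d =>
    comp_eq_of_tendsto hQlim ((eventually_ge_atTop d).mono fun d' h => (hmono d d' h).1)
  have hPQ : ∀ d, kAdj J (P d) ∘L kAdj J Q = kAdj J (P d) := fun d => by
    rw [← kAdj_comp hJ, hQP]
  have hrange : LinearMap.range (kAdj J Q : H →ₗ[ℂ] H)
      ≤ (⨆ d, LinearMap.range (kAdj J (P d) : H →ₗ[ℂ] H)).topologicalClosure := by
    simp only [kAdj_eq_adjoint_conj hJ]
    exact range_adjoint_le_closure_iSup_range_adjoint fun x =>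
      (J.continuous.tendsto _).comp (hQlim (J x))
  have hfix : ∀ x ∈ (⨆ d, LinearMap.range (kAdj J (P d) : H →ₗ[ℂ] H)).topologicalClosure,
      Tendsto (fun d => kAdj J (P d) x) atTop (𝓝 x) := fun x =>
    tendsto_apply_self_of_mem_closure_iSup_range (C := ‖J‖ * C * ‖J‖)
      (fun d => (norm_kAdj_le (P d)).trans (by gcongr; exact hC d))
      (fun d d' h => by rw [← kAdj_comp hJ, (hmono d d' h).2])
  have hconv : ∀ f, Tendsto (fun d => kAdj J (P d) f) atTop (𝓝 (kAdj J Q f)) := fun f => by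
    have hf := hfix (kAdj J Q f) (hrange ⟨f, rfl⟩)
    simpa only [← comp_apply, hPQ] using hf
  refine ⟨(comp_kAdj_comm_iff hJ Q).2 fun f g => ?_, hconv,
    le_antisymm hrange fun x hx => ⟨x, tendsto_nhds_unique (hconv x) (hfix x hx)⟩,
    ker_eq_iInf_ker_of_tendsto hconv hPQ⟩
  have hgram := fun d => (comp_kAdj_comm_iff hJ (P d)).1 (hnorm d) f g
  exact tendsto_nhds_unique
    ((((J.continuous.tendsto _).comp (hconv f)).inner (hconv g)).congr hgram)
    (((J.continuous.tendsto _).comp (hQlim f)).inner (hQlim g))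

/-- if moreover each `P_d` is a normal projection with respect to
the indefinite adjoint, then the strong limit `Q` is a normal projection,
`P_d* → Q*` strongly, `ran Q*` is the closed span of the `ran P_d*`, and
`ker Q* = ⋂ ker P_d*`. -/
theorem net_of_normal_projections_limit_normal {D : Type*} [Nonempty D]
    [Preorder D] [IsDirected D (· ≤ ·)] (J : H →L[ℂ] H) (hJ : IsFundSym J)
    (P : D → H →L[ℂ] H)
    (hproj : ∀ d, P d ∘L P d = P d)
    (hmono : ∀ d d', d ≤ d' → P d' ∘L P d = P d ∧ P d ∘L P d' = P d)
    (C : ℝ) (hC : ∀ d, ‖P d‖ ≤ C)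
    (hnorm : ∀ d, P d ∘L kAdj J (P d) = kAdj J (P d) ∘L P d)
    (Q : H →L[ℂ] H) (hQproj : Q ∘L Q = Q)
    (hQlim : ∀ f : H, Filter.Tendsto (fun d => P d f) Filter.atTop (nhds (Q f))) :
    Q ∘L kAdj J Q = kAdj J Q ∘L Q ∧
    (∀ f : H, Filter.Tendsto (fun d => kAdj J (P d) f) Filter.atTop
        (nhds (kAdj J Q f))) ∧
    LinearMap.range (kAdj J Q : H →ₗ[ℂ] H)
      = (⨆ d, LinearMap.range (kAdj J (P d) : H →ₗ[ℂ] H)).topologicalClosure ∧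
    LinearMap.ker (kAdj J Q : H →ₗ[ℂ] H) = ⨅ d, LinearMap.ker (kAdj J (P d) : H →ₗ[ℂ] H) :=
  net_of_normal_projections_limit_normal_general J hJ P hmono C hC hnorm Q hQlim

end KreinPaper
end
end
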